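/- Let q be a prime power and s a positive divisor of q−1 with sm = q−1. In PGL(3, F_{q²}-bar), the set of diagonal matrices A_b = diag(b^{q+1}, b, 1) where b ranges over the m-th powers of nonzero elements of F_{q²} forms a cyclic group of order s(q+1). -/
import Mathlib

/-- Diagonal embedding `b ↦ diag(b^{q+1}, b, 1)` as a monoid hom. -/
def diagHomAux (q : ℕ) (F K : Type*) [CommSemiring F] [CommSemiring K] [Algebra F K] :
    F →* Matrix (Fin 3) (Fin 3) K where
  toFun b := Matrix.diagonal ![algebraMap F K (b ^ (q + 1)), algebraMap F K b, 1]
  map_one' := by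
    ext i j
    fin_cases i <;> fin_cases j <;>
      simp [Matrix.diagonal, Matrix.one_apply]
  map_mul' a b := by
    show Matrix.diagonal _ = Matrix.diagonal _ * Matrix.diagonal _
    rw [Matrix.diagonal_mul_diagonal]
    ext i j
    fin_cases i <;> fin_cases j <;>
      simp [Matrix.diagonal, mul_pow]

theorem diagHomAux_injective (q : ℕ) (F K : Type*) [Field F] [Field K] [Algebra F K] :
    Function.Injective (diagHomAux q F K) := by
  intro a b h
  have h1 : algebraMap F K a = algebraMap F K b := by
    have := congrFun (congrFun (congrArg (fun M => (M : Matrix (Fin 3) (Fin 3) K)) h) 1) 1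
    simpa [diagHomAux, Matrix.diagonal_apply_eq] using this
  exact (algebraMap F K).injective h1

/-- Let `q` be a prime power and `s` a positive divisor of `q − 1` with `s·m = q − 1`.
Over an algebraic closure `K` of the field `F` with `q²` elements, the set of diagonal
matrices `A_b = diag(b^{q+1}, b, 1)`, where `b` ranges over the `m`-th powers of
nonzero elements of `F`, forms a cyclic group of order `s(q+1)`.  (None of these
matrices except the identity is scalar, so this subgroup of `GL(3,K)` maps
isomorphically onto its image in `PGL(3,K)`.) -/
theorem diagonal_matrices_form_cyclic_group
    (p ν : ℕ) (hp : p.Prime) (hν : 1 ≤ ν) (q : ℕ) (hq : q = p ^ ν)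
    (s m : ℕ) (hs : 0 < s) (hm : 0 < m) (hsm : s * m = q - 1)
    (F : Type*) [Field F] [Fintype F] (hF : Fintype.card F = q ^ 2)
    (K : Type*) [Field K] [IsAlgClosed K] [Algebra F K] :
    ∃ H : Subgroup (GL (Fin 3) K),
      ((fun u : GL (Fin 3) K => (u : Matrix (Fin 3) (Fin 3) K)) '' H
        = { M | ∃ c : Fˣ, M = Matrix.diagonal
            ![algebraMap F K (((c : F) ^ m) ^ (q + 1)),
              algebraMap F K ((c : F) ^ m), 1] }) ∧
      IsCyclic H ∧ Nat.card H = s * (q + 1) := by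
  classical
  -- the group hom `ψ : Fˣ →* GL 3 K`, `b ↦ diag(b^{q+1}, b, 1)`
  set ψ : Fˣ →* GL (Fin 3) K := Units.map (diagHomAux q F K) with hψ
  have hψinj : Function.Injective ψ :=
    Units.map_injective (diagHomAux_injective q F K)
  set χ : Fˣ →* GL (Fin 3) K := ψ.comp (powMonoidHom m) with hχ
  have key : ∀ c : Fˣ, ((χ c : GL (Fin 3) K) : Matrix (Fin 3) (Fin 3) K)
      = Matrix.diagonal ![algebraMap F K (((c : F) ^ m) ^ (q + 1)),
          algebraMap F K ((c : F) ^ m), 1] := by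
    intro c
    show (diagHomAux q F K) ((c ^ m : Fˣ) : F) = _
    rw [Units.val_pow_eq_pow_val]
    rfl
  refine ⟨χ.range, ?_, ?_, ?_⟩
  · ext M
    constructor
    · rintro ⟨u, ⟨c, rfl⟩, rfl⟩
      exact ⟨c, (key c).symm⟩
    · rintro ⟨c, rfl⟩
      exact ⟨χ c, ⟨c, rfl⟩, key c⟩
  · exact isCyclic_of_surjective χ.rangeRestrict χ.rangeRestrict_surjective
  · -- cardinality
    obtain ⟨g, hg⟩ := IsCyclic.exists_generator (α := Fˣ)
    have hq2 : 2 ≤ q := by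
      rw [hq]
      calc 2 ≤ p := hp.two_le
      _ ≤ p ^ ν := Nat.le_self_pow (by omega) p
    have hcard : Fintype.card Fˣ = q ^ 2 - 1 := by
      rw [Fintype.card_units, hF]
    have horder : orderOf g = q ^ 2 - 1 := by
      rw [orderOf_eq_card_of_forall_mem_zpowers hg, Nat.card_eq_fintype_card, hcard]
    have hfact : q ^ 2 - 1 = s * (q + 1) * m := by
      have h1 : q - 1 = s * m := hsm.symm
      have : (q - 1) * (q + 1) = q ^ 2 - 1 := by
        have h4 : 1 ≤ q ^ 2 := Nat.one_le_pow _ _ (by omega)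
        zify [h4, (by omega : 1 ≤ q)]
        ring
      rw [← this, h1]; ring
    -- range of `powMonoidHom m` is `zpowers (g ^ m)`
    have hrange : (powMonoidHom m : Fˣ →* Fˣ).range = Subgroup.zpowers (g ^ m) := by
      ext x
      simp only [MonoidHom.mem_range, powMonoidHom_apply, Subgroup.mem_zpowers_iff]
      constructor
      · rintro ⟨c, rfl⟩
        obtain ⟨k, rfl⟩ := Subgroup.mem_zpowers_iff.mp (hg c)
        exact ⟨k, by rw [← zpow_natCast, ← zpow_mul, mul_comm, zpow_mul, zpow_natCast]⟩
      · rintro ⟨k, rfl⟩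
        exact ⟨g ^ k, by rw [← zpow_natCast, ← zpow_mul, mul_comm, zpow_mul, zpow_natCast]⟩
    have hrangeχ : χ.range = ((powMonoidHom m : Fˣ →* Fˣ).range).map ψ :=
      MonoidHom.range_comp ψ (powMonoidHom m)
    have hcardχ : Nat.card χ.range = Nat.card (powMonoidHom m : Fˣ →* Fˣ).range := by
      rw [hrangeχ]
      exact (Nat.card_congr
        ((Subgroup.equivMapOfInjective _ ψ hψinj).toEquiv)).symm
    rw [hcardχ, hrange, Nat.card_zpowers, orderOf_pow, horder]
    have hmd : m ∣ q ^ 2 - 1 := ⟨s * (q + 1), by rw [hfact]; ring⟩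
    rw [Nat.gcd_eq_right hmd, hfact, Nat.mul_div_cancel _ hm]
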